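/- For every extensional digraph G, every n < ω, and all x₀, x₁ ∈ M_n(G), there exists y ∈ M_{n+1}(G) such that for all z ∈ M_ω(G), z E_ω y if and only if z = x₀ or z = x₁ (the Pairing axiom holds in 𝕍_ω(G)). -/
import Mathlib


/-- An extensional digraph: a set `M` (of ZF-sets) together with a binary relation
`E` on `M` such that any two elements of `M` with the same `E`-predecessors are
equal. -/
structure ExtDigraph where
  /-- The carrier set. -/
  M : ZFSet
  /-- The edge relation. -/
  E : ZFSet → ZFSet → Prop
  dom_left : ∀ x y, E x y → x ∈ M
  dom_right : ∀ x y, E x y → y ∈ M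
  ext : ∀ x y, x ∈ M → y ∈ M → (∀ z, E z x ↔ E z y) → x = y

namespace ExtDigraph

/-- The von Neumann natural number `n` as a ZF-set, used as a tag. -/
def tag : ℕ → ZFSet
  | 0 => ∅
  | n + 1 => insert (tag n) (tag n)

/-- The deficiency of a digraph `(M, E)`: the collection of subsets of `M` which are
not the `E`-predecessor set of any element of `M`. -/
def defic (M : ZFSet) (E : ZFSet → ZFSet → Prop) : ZFSet :=
  (ZFSet.powerset M).sep fun X => ¬ ∃ y, y ∈ M ∧ ∀ z, z ∈ M → (z ∈ X ↔ E z y)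

/-- The digraphs `𝕍_n(G) = (M_n, E_n)`, defined recursively:
`M_0 = {0} × M` with `(0,x) E_0 (0,y)` iff `x E y`; and
`M_{n+1} = M_n ∪ ({n+1} × D(𝕍_n))` where `E_{n+1}` adds the pairs
`(z, (n+1, X))` for `z ∈ X ∈ D(𝕍_n)`. -/
def lvl (G : ExtDigraph) : ℕ → ZFSet × (ZFSet → ZFSet → Prop)
  | 0 =>
    (ZFSet.prod {tag 0} G.M,
      fun a b => ∃ x y, G.E x y ∧ a = ZFSet.pair (tag 0) x ∧ b = ZFSet.pair (tag 0) y)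
  | n + 1 =>
    let p := lvl G n
    (p.1 ∪ ZFSet.prod {tag (n + 1)} (defic p.1 p.2),
      fun a b => p.2 a b ∨
        ∃ X, X ∈ defic p.1 p.2 ∧ b = ZFSet.pair (tag (n + 1)) X ∧ a ∈ X)

/-- The carrier `M_n(G)` of `𝕍_n(G)`. -/
def Mlvl (G : ExtDigraph) (n : ℕ) : ZFSet := (lvl G n).1

/-- The edge relation `E_n(G)` of `𝕍_n(G)`. -/
def Elvl (G : ExtDigraph) (n : ℕ) : ZFSet → ZFSet → Prop := (lvl G n).2

/-- Membership in `M_ω(G) = ⋃_{n<ω} M_n(G)`. -/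
def MemMomega (G : ExtDigraph) (x : ZFSet) : Prop := ∃ n, x ∈ Mlvl G n

/-- The edge relation `E_ω(G) = ⋃_{n<ω} E_n(G)` of `𝕍_ω(G)`. -/
def Eomega (G : ExtDigraph) (a b : ZFSet) : Prop := ∃ n, Elvl G n a b

/-- The carrier of `𝕍_m(G)` for `m ≤ ω` (with `⊤` standing for `ω`), as a class. -/
def MlvlI (G : ExtDigraph) : ℕ∞ → Set ZFSet :=
  WithTop.recTopCoe {x | MemMomega G x} fun n => {x | x ∈ Mlvl G n}

/-- The edge relation of `𝕍_m(G)` for `m ≤ ω` (with `⊤` standing for `ω`). -/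
def ElvlI (G : ExtDigraph) : ℕ∞ → ZFSet → ZFSet → Prop :=
  WithTop.recTopCoe (Eomega G) fun n => Elvl G n

end ExtDigraph

section Aux

namespace ExtDigraph

lemma tag_mem_tag {m k : ℕ} (h : m < k) : tag m ∈ tag k := by
  induction k with
  | zero => omega
  | succ k ih =>
    rw [tag]
    rcases Nat.lt_succ_iff_lt_or_eq.mp h with h' | h'
    · exact ZFSet.mem_insert_iff.mpr (Or.inr (ih h'))
    · subst h'; exact ZFSet.mem_insert_iff.mpr (Or.inl rfl)

lemma tag_injective : Function.Injective tag := by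
  intro m k h
  by_contra hne
  rcases Nat.lt_or_ge m k with hlt | hge
  · exact ZFSet.mem_irrefl _ (h ▸ tag_mem_tag hlt)
  · exact ZFSet.mem_irrefl _ (h ▸ tag_mem_tag (lt_of_le_of_ne hge (Ne.symm hne)))

lemma Mlvl_zero (G : ExtDigraph) : Mlvl G 0 = ZFSet.prod {tag 0} G.M := rfl

lemma Mlvl_succ (G : ExtDigraph) (k : ℕ) :
    Mlvl G (k + 1) = Mlvl G k ∪ ZFSet.prod {tag (k + 1)} (defic (Mlvl G k) (Elvl G k)) := rfl

lemma Elvl_zero (G : ExtDigraph) (a b : ZFSet) :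
    Elvl G 0 a b ↔ ∃ x y, G.E x y ∧ a = ZFSet.pair (tag 0) x ∧ b = ZFSet.pair (tag 0) y :=
  Iff.rfl

lemma Elvl_succ (G : ExtDigraph) (k : ℕ) (a b : ZFSet) :
    Elvl G (k + 1) a b ↔ Elvl G k a b ∨
      ∃ X, X ∈ defic (Mlvl G k) (Elvl G k) ∧ b = ZFSet.pair (tag (k + 1)) X ∧ a ∈ X :=
  Iff.rfl

lemma shape {G : ExtDigraph} {k : ℕ} {x : ZFSet} (h : x ∈ Mlvl G k) :
    ∃ j, j ≤ k ∧ ∃ w, x = ZFSet.pair (tag j) w := by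
  induction k with
  | zero =>
    rw [Mlvl_zero] at h
    rcases ZFSet.mem_prod.mp h with ⟨a, ha, b, _, rfl⟩
    exact ⟨0, le_rfl, b, by rw [ZFSet.mem_singleton.mp ha]⟩
  | succ k ih =>
    rw [Mlvl_succ] at h
    rcases ZFSet.mem_union.mp h with h | h
    · obtain ⟨j, hj, w, hw⟩ := ih h; exact ⟨j, hj.trans (Nat.le_succ k), w, hw⟩
    · rcases ZFSet.mem_prod.mp h with ⟨a, ha, b, _, rfl⟩
      exact ⟨k + 1, le_rfl, b, by rw [ZFSet.mem_singleton.mp ha]⟩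

lemma Elvl_dom_left {G : ExtDigraph} {k : ℕ} {z y : ZFSet} (h : Elvl G k z y) :
    z ∈ Mlvl G k := by
  induction k with
  | zero =>
    obtain ⟨x, y', hE, rfl, -⟩ := (Elvl_zero G z y).mp h
    exact ZFSet.pair_mem_prod.mpr ⟨ZFSet.mem_singleton.mpr rfl, G.dom_left _ _ hE⟩
  | succ k ih =>
    rw [Mlvl_succ]
    rcases (Elvl_succ G k z y).mp h with h | ⟨X, hX, -, hzX⟩
    · exact ZFSet.mem_union.mpr (Or.inl (ih h))
    · have := (ZFSet.mem_sep.mp hX).1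
      exact ZFSet.mem_union.mpr (Or.inl (ZFSet.mem_powerset.mp this hzX))

lemma Elvl_dom_right {G : ExtDigraph} {k : ℕ} {z y : ZFSet} (h : Elvl G k z y) :
    y ∈ Mlvl G k := by
  induction k with
  | zero =>
    obtain ⟨x, y', hE, -, rfl⟩ := (Elvl_zero G z y).mp h
    exact ZFSet.pair_mem_prod.mpr ⟨ZFSet.mem_singleton.mpr rfl, G.dom_right _ _ hE⟩
  | succ k ih =>
    rw [Mlvl_succ]
    rcases (Elvl_succ G k z y).mp h with h | ⟨X, hX, rfl, -⟩
    · exact ZFSet.mem_union.mpr (Or.inl (ih h))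
    · exact ZFSet.mem_union.mpr (Or.inr
        (ZFSet.pair_mem_prod.mpr ⟨ZFSet.mem_singleton.mpr rfl, hX⟩))

lemma Mlvl_mono {G : ExtDigraph} {k m : ℕ} (h : k ≤ m) {x : ZFSet}
    (hx : x ∈ Mlvl G k) : x ∈ Mlvl G m := by
  induction m with
  | zero => exact (Nat.le_zero.mp h) ▸ hx
  | succ m ih =>
    rcases Nat.le_succ_iff.mp h with h | h
    · rw [Mlvl_succ]; exact ZFSet.mem_union.mpr (Or.inl (ih h))
    · subst h; exact hx

lemma Elvl_mono {G : ExtDigraph} {k m : ℕ} (h : k ≤ m) {z y : ZFSet}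
    (hzy : Elvl G k z y) : Elvl G m z y := by
  induction m with
  | zero => exact (Nat.le_zero.mp h) ▸ hzy
  | succ m ih =>
    rcases Nat.le_succ_iff.mp h with h | h
    · exact (Elvl_succ G m z y).mpr (Or.inl (ih h))
    · subst h; exact hzy

lemma Elvl_restrict {G : ExtDigraph} {k m z y : _} (hkm : k ≤ m)
    (hy : y ∈ Mlvl G k) (h : Elvl G m z y) : Elvl G k z y := by
  induction m with
  | zero => exact (Nat.le_zero.mp hkm) ▸ h
  | succ m ih =>
    rcases Nat.le_succ_iff.mp hkm with hkm | hkm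
    · rcases (Elvl_succ G m z y).mp h with h | ⟨X, hX, rfl, -⟩
      · exact ih hkm h
      · exfalso
        obtain ⟨j, hj, w, hw⟩ := shape hy
        have := (ZFSet.pair_injective hw.symm).1
        have := tag_injective this
        omega
    · subst hkm; exact h

end ExtDigraph

end Aux


open ExtDigraph

/-- **Pairing in `𝕍_ω(G)`.** For every extensional digraph `G`, every `n < ω` and
all `x₀, x₁ ∈ M_n(G)`, there is `y ∈ M_{n+1}(G)` such that for all `z ∈ M_ω(G)`,
`z E_ω y` iff `z = x₀` or `z = x₁`. -/


theorem Vomega_pairing (G : ExtDigraph) (n : ℕ) (x₀ x₁ : ZFSet)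
    (h₀ : x₀ ∈ Mlvl G n) (h₁ : x₁ ∈ Mlvl G n) :
    ∃ y, y ∈ Mlvl G (n + 1) ∧
      ∀ z, MemMomega G z → (Eomega G z y ↔ (z = x₀ ∨ z = x₁)) := by
  set X : ZFSet := {x₀, x₁} with hXdef
  have hmemX : ∀ z : ZFSet, z ∈ X ↔ z = x₀ ∨ z = x₁ := by
    intro z
    simp [hXdef, ZFSet.mem_insert_iff, ZFSet.mem_singleton]
  have hXpow : X ∈ ZFSet.powerset (Mlvl G n) := by
    rw [ZFSet.mem_powerset]
    intro z hz
    rcases (hmemX z).mp hz with rfl | rfl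
    · exact h₀
    · exact h₁
  by_cases hc : X ∈ defic (Mlvl G n) (Elvl G n)
  · refine ⟨ZFSet.pair (tag (n + 1)) X, ?_, ?_⟩
    · rw [Mlvl_succ]
      exact ZFSet.mem_union.mpr (Or.inr
        (ZFSet.pair_mem_prod.mpr ⟨ZFSet.mem_singleton.mpr rfl, hc⟩))
    · intro z _
      constructor
      · rintro ⟨m, hm⟩
        have h1 : Elvl G (n + 1) z (ZFSet.pair (tag (n + 1)) X) := by
          rcases le_total m (n + 1) with hle | hle
          · exact Elvl_mono hle hm
          · refine Elvl_restrict hle ?_ hm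
            rw [Mlvl_succ]
            exact ZFSet.mem_union.mpr (Or.inr
              (ZFSet.pair_mem_prod.mpr ⟨ZFSet.mem_singleton.mpr rfl, hc⟩))
        rcases (Elvl_succ G n z _).mp h1 with h1 | ⟨X', hX', heq, hzX'⟩
        · exfalso
          obtain ⟨j, hj, w, hw⟩ := shape (Elvl_dom_right h1)
          have := tag_injective (ZFSet.pair_injective hw).1
          omega
        · have : X' = X := (ZFSet.pair_injective heq).2.symm
          exact (hmemX z).mp (this ▸ hzX')
      · intro hz
        exact ⟨n + 1, (Elvl_succ G n z _).mpr (Or.inr ⟨X, hc, rfl, (hmemX z).mpr hz⟩)⟩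
  · have hc' : ∃ y, y ∈ Mlvl G n ∧ ∀ z, z ∈ Mlvl G n → (z ∈ X ↔ Elvl G n z y) := by
      by_contra hno
      exact hc (ZFSet.mem_sep.mpr ⟨hXpow, hno⟩)
    obtain ⟨y, hyM, hy⟩ := hc'
    refine ⟨y, Mlvl_mono (Nat.le_succ n) hyM, ?_⟩
    intro z _
    constructor
    · rintro ⟨m, hm⟩
      have hzn : Elvl G n z y := by
        rcases le_total m n with hle | hle
        · exact Elvl_mono hle hm
        · exact Elvl_restrict hle hyM hm
      exact (hmemX z).mp ((hy z (Elvl_dom_left hzn)).mpr hzn)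
    · intro hz
      have hzM : z ∈ Mlvl G n := by
        rcases hz with rfl | rfl
        · exact h₀
        · exact h₁
      exact ⟨n, (hy z hzM).mp ((hmemX z).mpr hz)⟩
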